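/- arXiv:2309.00715 — 5 statements merged into one kernel-verified Lean document; each statement's English description precedes it below -/
import Mathlib

section
/- The maximum row sum of the Gram matrix G^{(n,d)} equals ∏_{j=1}^{n−1}(1 + j/d), which is at most e^{n(n−1)/2d}. Consequently, the maximum eigenvalue of G^{(n,d)} is at most e^{n(n−1)/2d}, and if n² ≤ d then the operator norm ‖G^{(n,d)} − I‖ ≤ n²/d. -/
/-- The minimal number of transpositions whose product is `π`. -/
noncomputable def transLength {n : ℕ} (π : Equiv.Perm (Fin n)) : ℕ :=
  sInf {k | ∃ l : List (Equiv.Perm (Fin n)),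
    l.length = k ∧ (∀ τ ∈ l, τ.IsSwap) ∧ l.prod = π}

/-- The Gram matrix `G^{(n,d)}` with entries `d^{-|π₁⁻¹ π₂|}`. -/
noncomputable def gramMatrix (n d : ℕ) :
    Matrix (Equiv.Perm (Fin n)) (Equiv.Perm (Fin n)) ℝ :=
  Matrix.of fun π₁ π₂ => ((d : ℝ)⁻¹) ^ transLength (π₁⁻¹ * π₂)

/-!
The length `|π|` equals `n` minus the dimension of the space of `π`-invariant vectors in `Kⁿ`:
multiplying by a transposition lowers that dimension by at most one, and writing a permutation
of `Fin (n + 1)` as `swap 0 p * π'` with `π'` fixing `0` changes both quantities by the same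
amount (`0` or `1` according as `p = 0`). This gives the recursion
`∑_{π ∈ S_{n+1}} z^|π| = (1 + n z) ∑_{π ∈ S_n} z^|π|`, so every row of `G` sums to
`∏_{j<n} (1 + j/d)`. Since `G` is symmetric with nonnegative entries, Schur's test (Cauchy–Schwarz
with weights `|Aᵢⱼ|`) bounds the `ℓ²` operator norms of `G` and of `G - 1` by their row sums;
`1 + x ≤ eˣ`, and `eˣ ≤ 1 + 2x` on `[0, 1/2]`, give the numerical bounds.
-/

open Equiv Module Finset

section FixedSubspace

variable (K : Type*) {α : Type*} [Field K]

def fixedSubspace (σ : Perm α) : Submodule K (α → K) where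
  carrier := {x | ∀ i, x (σ i) = x i}
  add_mem' hx hy i := by simp [hx i, hy i]
  zero_mem' _ := rfl
  smul_mem' c x hx i := by simp [hx i]

variable {K}

@[simp] lemma mem_fixedSubspace {σ : Perm α} {x : α → K} :
    x ∈ fixedSubspace K σ ↔ ∀ i, x (σ i) = x i := Iff.rfl

@[simp] lemma fixedSubspace_one : fixedSubspace K (1 : Perm α) = ⊤ := by
  ext x; simp

lemma fixedSubspace_inf_le_mul (σ τ : Perm α) :
    fixedSubspace K σ ⊓ fixedSubspace K τ ≤ fixedSubspace K (σ * τ) := by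
  rintro x ⟨hσ, hτ⟩ i
  rw [Perm.mul_apply, hσ, hτ]

variable [Fintype α]

lemma finrank_fixedSubspace_add_finrank_fixedSubspace_le (σ τ : Perm α) :
    finrank K (fixedSubspace K σ) + finrank K (fixedSubspace K τ)
      ≤ finrank K (fixedSubspace K (σ * τ)) + Fintype.card α := by
  have hsup := Submodule.finrank_le (fixedSubspace K σ ⊔ fixedSubspace K τ)
  have hinf := Submodule.finrank_mono (fixedSubspace_inf_le_mul (K := K) σ τ)
  rw [finrank_fintype_fun_eq_card] at hsup
  have := Submodule.finrank_sup_add_finrank_inf_eq (fixedSubspace K σ) (fixedSubspace K τ)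
  omega

lemma card_le_finrank_fixedSubspace_swap_add_one [DecidableEq α] (a b : α) :
    Fintype.card α ≤ finrank K (fixedSubspace K (swap a b)) + 1 := by
  set φ : (α → K) →ₗ[K] K := LinearMap.proj (R := K) (φ := fun _ => K) a - LinearMap.proj b
  have hker : LinearMap.ker φ ≤ fixedSubspace K (swap a b) := by
    intro x hx i
    simp only [LinearMap.mem_ker, φ, LinearMap.sub_apply, LinearMap.proj_apply, sub_eq_zero] at hx
    rcases eq_or_ne i a with rfl | hia
    · simp [hx]
    rcases eq_or_ne i b with rfl | hib
    · simp [hx]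
    · rw [swap_apply_of_ne_of_ne hia hib]
  have hrange := Submodule.finrank_le (LinearMap.range φ)
  have := φ.finrank_range_add_finrank_ker
  rw [finrank_self, finrank_fintype_fun_eq_card] at *
  have := Submodule.finrank_mono hker
  omega

lemma card_le_finrank_fixedSubspace_prod_add_length [DecidableEq α] (l : List (Perm α))
    (hl : ∀ τ ∈ l, τ.IsSwap) :
    Fintype.card α ≤ finrank K (fixedSubspace K l.prod) + l.length := by
  induction l with
  | nil => rw [List.prod_nil, fixedSubspace_one, finrank_top, finrank_fintype_fun_eq_card]; simp
  | cons τ l ih =>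
    obtain ⟨a, b, -, rfl⟩ := hl τ List.mem_cons_self
    have := card_le_finrank_fixedSubspace_swap_add_one (K := K) a b
    have := finrank_fixedSubspace_add_finrank_fixedSubspace_le (K := K) (swap a b) l.prod
    have := ih fun σ hσ => hl σ (List.mem_cons_of_mem _ hσ)
    rw [List.prod_cons, List.length_cons]
    omega

end FixedSubspace

section TransLength

variable {n : ℕ}

lemma exists_transLength_eq (π : Perm (Fin n)) :
    ∃ l : List (Perm (Fin n)), l.length = transLength π ∧ (∀ τ ∈ l, τ.IsSwap) ∧ l.prod = π := by
  obtain ⟨⟨l, hprod, hswap⟩, -⟩ := Trunc.exists_rep (Perm.truncSwapFactors π)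
  exact Nat.sInf_mem (s := {k | ∃ l : List (Perm (Fin n)), l.length = k ∧ (∀ τ ∈ l, τ.IsSwap) ∧
    l.prod = π}) ⟨l.length, l, rfl, hswap, hprod⟩

lemma transLength_le_length {π : Perm (Fin n)} (l : List (Perm (Fin n)))
    (hl : ∀ τ ∈ l, τ.IsSwap) (hprod : l.prod = π) : transLength π ≤ l.length :=
  Nat.sInf_le ⟨l, rfl, hl, hprod⟩

@[simp] lemma transLength_one : transLength (1 : Perm (Fin n)) = 0 :=
  Nat.le_zero.mp (transLength_le_length [] (by simp) rfl)

lemma transLength_swap_le (a b : Fin n) : transLength (swap a b) ≤ if a = b then 0 else 1 := by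
  split_ifs with hab
  · rw [hab, swap_self]
    exact transLength_one.le
  · exact transLength_le_length [swap a b] (by simpa using ⟨a, b, hab, rfl⟩) (by simp)

lemma transLength_mul_le (σ τ : Perm (Fin n)) :
    transLength (σ * τ) ≤ transLength σ + transLength τ := by
  obtain ⟨l, hlen, hl, rfl⟩ := exists_transLength_eq σ
  obtain ⟨l', hlen', hl', rfl⟩ := exists_transLength_eq τ
  refine (transLength_le_length (l ++ l') ?_ List.prod_append).trans (by simp [hlen, hlen'])
  simpa using fun τ hτ => hτ.elim (hl τ) (hl' τ)

lemma transLength_map_le {m : ℕ} (f : Perm (Fin n) →* Perm (Fin m))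
    (hf : ∀ τ, τ.IsSwap → (f τ).IsSwap) (π : Perm (Fin n)) :
    transLength (f π) ≤ transLength π := by
  obtain ⟨l, hlen, hl, rfl⟩ := exists_transLength_eq π
  refine (transLength_le_length (l.map f) ?_ (map_list_prod f l).symm).trans (by simp [hlen])
  simpa using fun τ hτ => hf τ (hl τ hτ)

lemma transLength_inv (π : Perm (Fin n)) : transLength π⁻¹ = transLength π := by
  suffices h : ∀ π : Perm (Fin n), transLength π⁻¹ ≤ transLength π from
    le_antisymm (h π) (by simpa using h π⁻¹)
  intro π
  obtain ⟨l, hlen, hl, rfl⟩ := exists_transLength_eq π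
  have hinv : l.map (·⁻¹) = l := by
    conv_rhs => rw [← List.map_id l]
    refine List.map_congr_left fun τ hτ => ?_
    obtain ⟨a, b, -, rfl⟩ := hl τ hτ
    exact swap_inv a b
  refine (transLength_le_length l.reverse (by simpa using hl) ?_).trans (by simp [hlen])
  rw [List.prod_inv_reverse, hinv]

variable (K : Type*) [Field K]

lemma card_le_finrank_fixedSubspace_add_transLength (π : Perm (Fin n)) :
    n ≤ finrank K (fixedSubspace K π) + transLength π := by
  obtain ⟨l, hlen, hl, rfl⟩ := exists_transLength_eq π
  simpa [hlen] using card_le_finrank_fixedSubspace_prod_add_length (K := K) l hl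

end TransLength

section DecomposeFin

open Perm

variable {n : ℕ}

def permSuccHom : Perm (Fin n) →* Perm (Fin (n + 1)) where
  toFun e := decomposeFin.symm (0, e)
  map_one' := by simp [← Perm.one_def]
  map_mul' e f := by
    ext i
    refine Fin.cases ?_ (fun j => ?_) i <;> simp [decomposeFin_symm_apply_succ]

@[simp] lemma permSuccHom_apply_zero (e : Perm (Fin n)) : permSuccHom e 0 = 0 :=
  decomposeFin_symm_apply_zero 0 e

@[simp] lemma permSuccHom_apply_succ (e : Perm (Fin n)) (j : Fin n) :
    permSuccHom e j.succ = (e j).succ := by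
  simp [permSuccHom, decomposeFin_symm_apply_succ]

lemma permSuccHom_swap (a b : Fin n) : permSuccHom (swap a b) = swap a.succ b.succ := by
  ext i
  refine Fin.cases ?_ (fun j => ?_) i
  · simp [swap_apply_of_ne_of_ne (Fin.succ_ne_zero a).symm (Fin.succ_ne_zero b).symm]
  · simp [swap_apply_def, apply_ite Fin.succ]

lemma decomposeFin_symm_eq_swap_mul (p : Fin (n + 1)) (e : Perm (Fin n)) :
    decomposeFin.symm (p, e) = swap 0 p * permSuccHom e := by
  ext i
  refine Fin.cases ?_ (fun j => ?_) i <;> simp [decomposeFin_symm_apply_succ]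

lemma transLength_decomposeFin_symm_le (p : Fin (n + 1)) (e : Perm (Fin n)) :
    transLength (decomposeFin.symm (p, e)) ≤ transLength e + if p = 0 then 0 else 1 := by
  have hswap := transLength_swap_le 0 p
  have hsucc := transLength_map_le permSuccHom (fun τ ⟨a, b, hab, hτ⟩ =>
    ⟨a.succ, b.succ, (Fin.succ_injective n).ne hab, hτ ▸ permSuccHom_swap a b⟩) e
  have := transLength_mul_le (swap 0 p) (permSuccHom e)
  rw [decomposeFin_symm_eq_swap_mul]
  split_ifs at * <;> omega

variable (K : Type*) [Field K]

/- Restriction to the coordinates `1, …, n` maps `π`-invariant vectors to `e`-invariant ones; its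
kernel is spanned by `Pi.single 0 1` if `p = 0` and is trivial otherwise, since `x 0 = x p`. -/
lemma finrank_fixedSubspace_decomposeFin_symm_le (p : Fin (n + 1)) (e : Perm (Fin n)) :
    finrank K (fixedSubspace K (decomposeFin.symm (p, e)))
      ≤ finrank K (fixedSubspace K e) + if p = 0 then 1 else 0 := by
  set π := decomposeFin.symm (p, e)
  have hπ0 : π 0 = p := decomposeFin_symm_apply_zero p e
  have hres : ∀ x ∈ fixedSubspace K π, x ∘ Fin.succ ∈ fixedSubspace K e := by
    intro x hx j
    have hj := hx j.succ
    rw [decomposeFin_symm_apply_succ] at hj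
    by_cases hp : (e j).succ = p
    · rw [hp, swap_apply_right] at hj
      simp only [Function.comp_apply, hp, ← hπ0, hx 0, hj]
    · rwa [swap_apply_of_ne_of_ne (Fin.succ_ne_zero _) hp] at hj
  let R : fixedSubspace K π →ₗ[K] fixedSubspace K e :=
    ((LinearMap.funLeft K K Fin.succ).comp (fixedSubspace K π).subtype).codRestrict _
      fun x => hres x x.2
  have hR : ∀ x : fixedSubspace K π, R x = 0 → (x : Fin (n + 1) → K) 0 = 0 → x = 0 := by
    intro x hx hx0
    ext i
    exact Fin.cases hx0 (fun j => congr_fun (congr_arg Subtype.val hx) j) i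
  split_ifs with hp
  · let F := ((LinearMap.proj 0).comp (fixedSubspace K π).subtype).prod R
    have hF : Function.Injective F := by
      refine (injective_iff_map_eq_zero F).2 fun x hx => hR x ?_ ?_
      · exact congr_arg Prod.snd hx
      · exact congr_arg Prod.fst hx
    simpa [add_comm] using LinearMap.finrank_le_finrank_of_injective hF
  · have hR' : Function.Injective R := by
      refine (injective_iff_map_eq_zero R).2 fun x hx => hR x hx ?_
      obtain ⟨p, rfl⟩ := Fin.exists_succ_eq.2 hp
      rw [← x.2 0, hπ0]
      exact congr_fun (congr_arg Subtype.val hx) p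
    simpa using LinearMap.finrank_le_finrank_of_injective hR'

lemma transLength_add_finrank_fixedSubspace (π : Perm (Fin n)) :
    transLength π + finrank K (fixedSubspace K π) = n := by
  induction n with
  | zero =>
    rw [Subsingleton.elim π 1, transLength_one, fixedSubspace_one, finrank_top,
      finrank_fintype_fun_eq_card, Fintype.card_fin]
  | succ n ih =>
    obtain ⟨⟨p, e⟩, rfl⟩ := decomposeFin.symm.surjective π
    have := card_le_finrank_fixedSubspace_add_transLength K (decomposeFin.symm (p, e))
    have := transLength_decomposeFin_symm_le p e
    have := finrank_fixedSubspace_decomposeFin_symm_le K p e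
    have := ih e
    split_ifs at * <;> linarith

lemma transLength_decomposeFin_symm (p : Fin (n + 1)) (e : Perm (Fin n)) :
    transLength (decomposeFin.symm (p, e)) = transLength e + if p = 0 then 0 else 1 := by
  have := transLength_add_finrank_fixedSubspace ℚ (decomposeFin.symm (p, e))
  have := transLength_add_finrank_fixedSubspace ℚ e
  have := finrank_fixedSubspace_decomposeFin_symm_le ℚ p e
  have := transLength_decomposeFin_symm_le p e
  split_ifs at * <;> linarith

end DecomposeFin

theorem sum_pow_transLength {R : Type*} [CommSemiring R] (z : R) (n : ℕ) :
    ∑ π : Perm (Fin n), z ^ transLength π = ∏ j ∈ range n, (1 + j * z) := by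
  induction n with
  | zero => simp [Subsingleton.elim _ (1 : Perm (Fin 0))]
  | succ n ih =>
    rw [← (Perm.decomposeFin (n := n)).symm.sum_comp, Fintype.sum_prod_type, prod_range_succ,
      ← ih, mul_comm, Fin.sum_univ_succ]
    simp only [transLength_decomposeFin_symm, ↓reduceIte, add_zero, Fin.succ_ne_zero, pow_add,
      pow_one, ← sum_mul, sum_const, card_univ, Fintype.card_fin, nsmul_eq_mul]
    ring

section SchurTest

variable {𝕜 m : Type*} [RCLike 𝕜] [Fintype m] [DecidableEq m]

lemma Matrix.toEuclideanCLM_apply_apply (A : Matrix m m 𝕜) (x : EuclideanSpace 𝕜 m) (i : m) :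
    Matrix.toEuclideanCLM (𝕜 := 𝕜) A x i = ∑ j, A i j * x j :=
  congr_fun (Matrix.ofLp_toEuclideanCLM A x) i

theorem Matrix.norm_toEuclideanCLM_le_of_sum_norm_le (A : Matrix m m 𝕜) {r : ℝ} (hr : 0 ≤ r)
    (hrow : ∀ i, ∑ j, ‖A i j‖ ≤ r) (hcol : ∀ j, ∑ i, ‖A i j‖ ≤ r) :
    ‖Matrix.toEuclideanCLM (𝕜 := 𝕜) A‖ ≤ r := by
  refine ContinuousLinearMap.opNorm_le_bound _ hr fun x => ?_
  have hentry : ∀ i, ‖Matrix.toEuclideanCLM (𝕜 := 𝕜) A x i‖ ^ 2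
      ≤ r * ∑ j, ‖A i j‖ * ‖x j‖ ^ 2 := fun i => calc
    _ ≤ (∑ j, ‖A i j‖ * ‖x j‖) ^ 2 := by
      rw [Matrix.toEuclideanCLM_apply_apply]
      gcongr
      exact (norm_sum_le _ _).trans_eq (by simp_rw [norm_mul])
    _ ≤ (∑ j, ‖A i j‖) * ∑ j, ‖A i j‖ * ‖x j‖ ^ 2 :=
      sum_sq_le_sum_mul_sum_of_sq_le_mul _ (fun _ _ => norm_nonneg _) (fun _ _ => by positivity)
        fun _ _ => by ring_nf; rfl
    _ ≤ r * ∑ j, ‖A i j‖ * ‖x j‖ ^ 2 := by gcongr; exact hrow i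
  rw [← sq_le_sq₀ (norm_nonneg _) (by positivity), mul_pow, EuclideanSpace.norm_sq_eq,
    EuclideanSpace.norm_sq_eq]
  calc ∑ i, ‖Matrix.toEuclideanCLM (𝕜 := 𝕜) A x i‖ ^ 2
      ≤ ∑ i, r * ∑ j, ‖A i j‖ * ‖x j‖ ^ 2 := sum_le_sum fun i _ => hentry i
    _ = r * ∑ j, (∑ i, ‖A i j‖) * ‖x j‖ ^ 2 := by
      rw [← mul_sum, sum_comm]; simp_rw [sum_mul]
    _ ≤ r * ∑ j, r * ‖x j‖ ^ 2 := by gcongr with j; exact hcol j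
    _ = r ^ 2 * ∑ j, ‖x j‖ ^ 2 := by rw [← mul_sum]; ring

theorem Matrix.IsSymm.norm_toEuclideanCLM_le_of_sum_norm_le {A : Matrix m m 𝕜} (hA : A.IsSymm)
    {r : ℝ} (hr : 0 ≤ r) (hrow : ∀ i, ∑ j, ‖A i j‖ ≤ r) :
    ‖Matrix.toEuclideanCLM (𝕜 := 𝕜) A‖ ≤ r :=
  A.norm_toEuclideanCLM_le_of_sum_norm_le hr hrow fun j => by
    simpa only [hA.apply j] using hrow j

end SchurTest

lemma sum_range_natCast_mul_two (n : ℕ) : (∑ j ∈ range n, (j : ℝ)) * 2 = n * (n - 1) := by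
  induction n with
  | zero => simp
  | succ n ih => rw [sum_range_succ, add_mul, ih]; push_cast; ring

lemma prod_one_add_div_le_exp (n : ℕ) {d : ℝ} (hd : 0 ≤ d) :
    ∏ j ∈ range n, (1 + (j : ℝ) / d) ≤ Real.exp ((n * (n - 1) : ℝ) / (2 * d)) := calc
  _ ≤ ∏ j ∈ range n, Real.exp ((j : ℝ) / d) :=
    prod_le_prod (fun _ _ => by positivity) fun j _ => by linarith [Real.add_one_le_exp (j / d)]
  _ = Real.exp ((n * (n - 1) : ℝ) / (2 * d)) := by
    rw [← Real.exp_sum, ← sum_div, ← sum_range_natCast_mul_two, mul_comm 2 d,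
      mul_div_mul_right _ _ two_ne_zero]

lemma Real.exp_le_one_add_two_mul {x : ℝ} (hx₀ : 0 ≤ x) (hx : x ≤ 1 / 2) :
    Real.exp x ≤ 1 + 2 * x := by
  refine (Real.exp_bound_div_one_sub_of_interval hx₀ (by linarith)).trans ?_
  rw [div_le_iff₀ (by linarith)]
  nlinarith

lemma prod_one_add_div_sub_one_le (n : ℕ) {d : ℝ} (hd : 0 ≤ d) (hn : (n : ℝ) ^ 2 ≤ d) :
    ∏ j ∈ range n, (1 + (j : ℝ) / d) - 1 ≤ (n : ℝ) ^ 2 / d := by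
  rcases hd.eq_or_lt with rfl | hd
  · obtain rfl : n = 0 := by simpa using hn
    simp
  set x : ℝ := (n * (n - 1) : ℝ) / (2 * d)
  have hx₀ : 0 ≤ x := by
    simp only [x, ← sum_range_natCast_mul_two]
    positivity
  have hx : 2 * x ≤ (n : ℝ) ^ 2 / d := by
    rw [show 2 * x = n * (n - 1) / d by simp only [x]; field_simp]
    gcongr
    nlinarith
  have hx₁ : x ≤ 1 / 2 := by linarith [(div_le_one hd).2 hn]
  linarith [(prod_one_add_div_le_exp n hd.le).trans (Real.exp_le_one_add_two_mul hx₀ hx₁)]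

section GramMatrix

variable (n d : ℕ)

lemma gramMatrix_nonneg (π₁ π₂ : Perm (Fin n)) : 0 ≤ gramMatrix n d π₁ π₂ :=
  pow_nonneg (inv_nonneg.2 d.cast_nonneg) _

lemma gramMatrix_isSymm : (gramMatrix n d).IsSymm := by
  ext π₁ π₂
  simp [gramMatrix, ← transLength_inv (π₁⁻¹ * π₂)]

lemma sum_gramMatrix_row (π₁ : Perm (Fin n)) :
    ∑ π₂, gramMatrix n d π₁ π₂ = ∏ j ∈ range n, (1 + (j : ℝ) / d) := by
  simp_rw [div_eq_mul_inv, ← sum_pow_transLength]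
  exact Fintype.sum_equiv (Equiv.mulLeft π₁⁻¹) _ _ fun _ => rfl

lemma sum_norm_gramMatrix_sub_one_row (π₁ : Perm (Fin n)) :
    ∑ π₂, ‖(gramMatrix n d - 1) π₁ π₂‖ = ∏ j ∈ range n, (1 + (j : ℝ) / d) - 1 := by
  have hnonneg : ∀ π₂, 0 ≤ (gramMatrix n d - 1) π₁ π₂ := fun π₂ => by
    rcases eq_or_ne π₁ π₂ with rfl | h
    · simp [gramMatrix]
    · simpa [Matrix.one_apply_ne h] using gramMatrix_nonneg n d π₁ π₂
  calc ∑ π₂, ‖(gramMatrix n d - 1) π₁ π₂‖ = ∑ π₂, (gramMatrix n d - 1) π₁ π₂ :=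
        sum_congr rfl fun π₂ _ => Real.norm_of_nonneg (hnonneg π₂)
    _ = _ := by simp [sum_sub_distrib, sum_gramMatrix_row, Matrix.one_apply]

end GramMatrix

theorem gram_row_sum_and_norm_bounds_general (n d : ℕ) :
    (∀ π₁ : Equiv.Perm (Fin n),
      ∑ π₂ : Equiv.Perm (Fin n), gramMatrix n d π₁ π₂
        = ∏ j ∈ Finset.range n, (1 + (j : ℝ) / d)) ∧
    (∏ j ∈ Finset.range n, (1 + (j : ℝ) / d)
        ≤ Real.exp ((n * (n - 1) : ℝ) / (2 * d))) ∧
    (‖Matrix.toEuclideanCLM (𝕜 := ℝ) (n := Equiv.Perm (Fin n)) (gramMatrix n d)‖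
        ≤ Real.exp ((n * (n - 1) : ℝ) / (2 * d))) ∧
    (((n : ℝ) ^ 2 ≤ d) →
      ‖Matrix.toEuclideanCLM (𝕜 := ℝ) (n := Equiv.Perm (Fin n)) (gramMatrix n d - 1)‖
        ≤ (n : ℝ) ^ 2 / d) := by
  have hexp := prod_one_add_div_le_exp n d.cast_nonneg
  refine ⟨sum_gramMatrix_row n d, hexp, ?_, fun hn => ?_⟩
  · refine (gramMatrix_isSymm n d).norm_toEuclideanCLM_le_of_sum_norm_le (Real.exp_nonneg _)
      fun π₁ => ?_
    simpa [Real.norm_of_nonneg (gramMatrix_nonneg n d _ _), sum_gramMatrix_row] using hexp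
  · refine ((gramMatrix_isSymm n d).sub Matrix.isSymm_one).norm_toEuclideanCLM_le_of_sum_norm_le
      (by positivity) fun π₁ => ?_
    rw [sum_norm_gramMatrix_sub_one_row]
    exact prod_one_add_div_sub_one_le n d.cast_nonneg hn

theorem gram_row_sum_and_norm_bounds (n d : ℕ) (hd : 1 ≤ d) :
    (∀ π₁ : Equiv.Perm (Fin n),
      ∑ π₂ : Equiv.Perm (Fin n), gramMatrix n d π₁ π₂
        = ∏ j ∈ Finset.range n, (1 + (j : ℝ) / d)) ∧
    (∏ j ∈ Finset.range n, (1 + (j : ℝ) / d)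
        ≤ Real.exp ((n * (n - 1) : ℝ) / (2 * d))) ∧
    (‖Matrix.toEuclideanCLM (𝕜 := ℝ) (n := Equiv.Perm (Fin n)) (gramMatrix n d)‖
        ≤ Real.exp ((n * (n - 1) : ℝ) / (2 * d))) ∧
    (((n : ℝ) ^ 2 ≤ d) →
      ‖Matrix.toEuclideanCLM (𝕜 := ℝ) (n := Equiv.Perm (Fin n)) (gramMatrix n d - 1)‖
        ≤ (n : ℝ) ^ 2 / d) :=
  gram_row_sum_and_norm_bounds_general n d
end

section
/- Let A = Σ_{π ∈ S_n} a_π P_d(π) with real coefficients and suppose ε := n²/d ≤ 1. Then the operator norm of A satisfies ‖A‖_∞ ≥ (1 − ε/2)·max_π |a_π|. -/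
/-!
The bound holds even without the factor `1 - ε/2`, as soon as `n ≤ d`. Choose a basis vector
`e_z` of `(ℂ^d)^{⊗ n}` whose `n` tensor factors are pairwise distinct basis vectors of `ℂ^d`.
The vectors `P_d(σ) e_z` are then distinct basis vectors, so the entry of `A` in row
`z ∘ π⁻¹` and column `z` is exactly `a_π`, and every matrix entry is bounded by the operator norm.
-/

/-- The permutation operator `P_d(π)` on `(ℂ^d)^{⊗ n}`. -/
def Pmat (n d : ℕ) (π : Equiv.Perm (Fin n)) :
    Matrix (Fin n → Fin d) (Fin n → Fin d) ℂ :=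
  Matrix.of fun x y => if y = x ∘ π then 1 else 0

open Matrix

theorem Matrix.norm_apply_le_norm_toEuclideanCLM {𝕜 ι : Type*} [RCLike 𝕜] [Fintype ι]
    [DecidableEq ι] (M : Matrix ι ι 𝕜) (i j : ι) :
    ‖M i j‖ ≤ ‖toEuclideanCLM (𝕜 := 𝕜) (n := ι) M‖ := by
  set T := toEuclideanCLM (𝕜 := 𝕜) (n := ι) M
  have hcol : T (EuclideanSpace.single j 1) i = M i j := by
    simp [T, EuclideanSpace.single, mulVec_single]
  calc ‖M i j‖ = ‖T (EuclideanSpace.single j 1) i‖ := by rw [hcol]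
    _ ≤ ‖T (EuclideanSpace.single j 1)‖ := PiLp.norm_apply_le _ _
    _ ≤ ‖T‖ := T.unit_le_opNorm _ (by simp)

theorem Pmat_apply_comp_inv_of_injective {n d : ℕ} {z : Fin n → Fin d}
    (hz : Function.Injective z) (σ π : Equiv.Perm (Fin n)) :
    Pmat n d σ (z ∘ ⇑π⁻¹) z = if σ = π then 1 else 0 := by
  have hcomp_iff : z = z ∘ ⇑π⁻¹ ∘ ⇑σ ↔ σ = π := by
    refine ⟨fun h => ?_, fun h => by simp [h]⟩
    ext i
    have := congrArg π (hz (congrFun h i))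
    simp only [Equiv.Perm.coe_inv, Function.comp_apply, Equiv.apply_symm_apply] at this
    exact congrArg Fin.val this.symm
  simp only [Pmat, of_apply]
  exact if_congr hcomp_iff rfl rfl

theorem sum_smul_Pmat_apply_comp_inv_of_injective {n d : ℕ} {z : Fin n → Fin d}
    (hz : Function.Injective z) (c : Equiv.Perm (Fin n) → ℂ) (π : Equiv.Perm (Fin n)) :
    (∑ σ, c σ • Pmat n d σ) (z ∘ ⇑π⁻¹) z = c π := by
  simp only [Matrix.sum_apply, Matrix.smul_apply, Pmat_apply_comp_inv_of_injective hz, smul_eq_mul,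
    mul_ite, mul_one, mul_zero, Finset.sum_ite_eq', Finset.mem_univ, if_true]

theorem norm_coeff_le_norm_sum_smul_Pmat {n d : ℕ} (hnd : n ≤ d)
    (c : Equiv.Perm (Fin n) → ℂ) (π : Equiv.Perm (Fin n)) :
    ‖c π‖ ≤ ‖toEuclideanCLM (𝕜 := ℂ) (n := Fin n → Fin d) (∑ σ, c σ • Pmat n d σ)‖ := by
  rw [← sum_smul_Pmat_apply_comp_inv_of_injective (Fin.castLE_injective hnd) c π]
  exact norm_apply_le_norm_toEuclideanCLM _ _ _

theorem op_norm_lower_bound_of_perm_combination (n d : ℕ) (hd : 1 ≤ d)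
    (a : Equiv.Perm (Fin n) → ℝ) (hε : (n : ℝ) ^ 2 / d ≤ 1) :
    let A : Matrix (Fin n → Fin d) (Fin n → Fin d) ℂ :=
      ∑ π : Equiv.Perm (Fin n), (a π : ℂ) • Pmat n d π
    let ε : ℝ := (n : ℝ) ^ 2 / d
    (1 - ε / 2) * (⨆ π : Equiv.Perm (Fin n), |a π|)
      ≤ ‖Matrix.toEuclideanCLM (𝕜 := ℂ) (n := Fin n → Fin d) A‖ := by
  intro A ε
  have hd_pos : (0 : ℝ) < d := by exact_mod_cast hd
  have hnd : n ≤ d := by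
    have : n ^ 2 ≤ d := by exact_mod_cast (div_le_one hd_pos).mp hε
    exact (Nat.le_self_pow two_ne_zero n).trans this
  have hsup_le : (⨆ π, |a π|) ≤ ‖toEuclideanCLM (𝕜 := ℂ) (n := Fin n → Fin d) A‖ :=
    ciSup_le fun π => by
      simpa only [Complex.norm_real, Real.norm_eq_abs] using
        norm_coeff_le_norm_sum_smul_Pmat hnd (fun σ => (a σ : ℂ)) π
  have hε_nonneg : 0 ≤ ε := by positivity
  have hsup_nonneg : 0 ≤ ⨆ π, |a π| := Real.iSup_nonneg fun π => abs_nonneg (a π)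
  exact (mul_le_of_le_one_left hsup_nonneg (by linarith)).trans hsup_le
end

section
/- Let π ∈ S_n, S ⊆ [n], and let Γ_S denote the partial transpose on the tensor factors indexed by S. Set k = |S ∩ π(S̄)| where S̄ = [n]∖S. Then P_d(π)^{Γ_S} has exactly d^{n−2k} nonzero singular values, each equal to d^k. Equivalently, (P_d(π)^{Γ_S})† P_d(π)^{Γ_S} = d^{2k} Q for a rank-d^{n−2k} orthogonal projection Q. -/
open Matrix

/-- The partial transpose `M^{Γ_S}` on the tensor factors indexed by `S`. -/
def ptrans {n d : ℕ} (S : Finset (Fin n))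
    (M : Matrix (Fin n → Fin d) (Fin n → Fin d) ℂ) :
    Matrix (Fin n → Fin d) (Fin n → Fin d) ℂ :=
  Matrix.of fun x y =>
    M (fun i => if i ∈ S then y i else x i) (fun i => if i ∈ S then x i else y i)

open scoped Classical

namespace PTproof

variable {n d : ℕ}

def Cnd (π : Equiv.Perm (Fin n)) (S : Finset (Fin n)) (x y : Fin n → Fin d) : Prop :=
  ∀ i, (if i ∈ S then x i else y i) = if π i ∈ S then y (π i) else x (π i)

def Pc (π : Equiv.Perm (Fin n)) (S : Finset (Fin n)) (y : Fin n → Fin d) : Prop :=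
  ∀ i, i ∉ S → π i ∈ S → y i = y (π i)

def Dag (π : Equiv.Perm (Fin n)) (S : Finset (Fin n)) (y z : Fin n → Fin d) : Prop :=
  ∀ i, (i ∈ S ∧ π.symm i ∈ S) ∨ (i ∉ S ∧ π i ∉ S) → y i = z i

lemma mem_image_perm {π : Equiv.Perm (Fin n)} {S : Finset (Fin n)} {j : Fin n} :
    j ∈ S.image (⇑π) ↔ π.symm j ∈ S := by
  simp only [Finset.mem_image]
  constructor
  · rintro ⟨a, ha, rfl⟩; simpa using ha
  · intro h; exact ⟨π.symm j, h, by simp⟩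

lemma dag_symm {π : Equiv.Perm (Fin n)} {S : Finset (Fin n)} {y z : Fin n → Fin d}
    (h : Dag π S y z) : Dag π S z y := fun i hi => (h i hi).symm

lemma dag_trans {π : Equiv.Perm (Fin n)} {S : Finset (Fin n)} {y z w : Fin n → Fin d}
    (h : Dag π S y z) (h' : Dag π S z w) : Dag π S y w := fun i hi => (h i hi).trans (h' i hi)

lemma dag_refl (π : Equiv.Perm (Fin n)) (S : Finset (Fin n)) (y : Fin n → Fin d) :
    Dag π S y y := fun _ _ => rfl

lemma card_filter_eq_pow (hd : 1 ≤ d) (p : (Fin n → Fin d) → Prop) [DecidablePred p]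
    (T : Finset (Fin n)) (Φ : (Fin n → Fin d) → (Fin n → Fin d))
    (hmem : ∀ f, p (Φ f))
    (hdep : ∀ f g : Fin n → Fin d, (∀ i ∈ T, f i = g i) → Φ f = Φ g)
    (hfix : ∀ a, p a → Φ a = a)
    (hres : ∀ f, ∀ i ∈ T, Φ f i = f i) :
    (Finset.univ.filter p).card = d ^ T.card := by
  have h0 : 0 < d := hd
  have key : (Finset.univ.filter p).card = (Finset.univ : Finset (T → Fin d)).card := by
    refine Finset.card_bij' (fun a _ => fun t : T => a t)
      (fun g _ => Φ (fun i => if h : i ∈ T then g ⟨i, h⟩ else ⟨0, h0⟩))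
      (fun a ha => Finset.mem_univ _)
      (fun g hg => ?_) (fun a ha => ?_) (fun g hg => ?_)
    · exact Finset.mem_filter.mpr ⟨Finset.mem_univ _, hmem _⟩
    · have hpa : p a := (Finset.mem_filter.mp ha).2
      show Φ _ = a
      rw [hdep _ a fun i hi => by simp [hi], hfix a hpa]
    · funext t
      show Φ _ ↑t = g t
      rw [hres _ _ t.2]
      simp [t.2]
  rw [key, Finset.card_univ, Fintype.card_fun, Fintype.card_fin, Fintype.card_coe]


variable {π : Equiv.Perm (Fin n)} {S : Finset (Fin n)}

lemma cnd_pc {x y : Fin n → Fin d} (hxy : Cnd π S x y) : Pc π S y := by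
  intro i hi hpi
  have h := hxy i
  rwa [if_neg hi, if_pos hpi] at h

lemma cnd_dag {x y z : Fin n → Fin d} (hxy : Cnd π S x y) (hxz : Cnd π S x z) :
    Dag π S y z := by
  rintro i (⟨hi, hsi⟩ | ⟨hi, hpi⟩)
  · have h1 := hxy (π.symm i); have h2 := hxz (π.symm i)
    rw [if_pos hsi, π.apply_symm_apply, if_pos hi] at h1 h2
    exact h1.symm.trans h2
  · have h1 := hxy i; have h2 := hxz i
    rw [if_neg hi, if_neg hpi] at h1 h2
    exact h1.trans h2.symm

/-- Completion map for the `x`-count. -/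
def Xof (π : Equiv.Perm (Fin n)) (S : Finset (Fin n)) (y f : Fin n → Fin d) : Fin n → Fin d :=
  fun j => if j ∈ S then (if π j ∈ S then y (π j) else f (π j))
    else (if π.symm j ∈ S then f j else y (π.symm j))

lemma card_cnd (hd : 1 ≤ d) {y z : Fin n → Fin d} (hy : Pc π S y) (hz : Pc π S z)
    (hyz : Dag π S y z) :
    (Finset.univ.filter fun x => Cnd π S x y ∧ Cnd π S x z).card
      = d ^ (Sᶜ ∩ S.image (⇑π)).card := by
  refine card_filter_eq_pow hd _ _ (Xof π S y) (fun f => ⟨?_, ?_⟩) ?_ ?_ ?_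
  · -- Cnd (Xof π S y f) y
    intro i
    by_cases hi : i ∈ S <;> by_cases hpi : π i ∈ S
    · rw [if_pos hi, if_pos hpi]; simp [Xof, hi, hpi]
    · rw [if_pos hi, if_neg hpi]
      simp [Xof, hi, hpi, π.symm_apply_apply]
    · rw [if_neg hi, if_pos hpi]; exact hy i hi hpi
    · rw [if_neg hi, if_neg hpi]
      simp [Xof, hi, hpi, π.symm_apply_apply]
  · -- Cnd (Xof π S y f) z
    intro i
    by_cases hi : i ∈ S <;> by_cases hpi : π i ∈ S
    · rw [if_pos hi, if_pos hpi]
      have : y (π i) = z (π i) := hyz (π i) (Or.inl ⟨hpi, by simpa using hi⟩)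
      simp [Xof, hi, hpi, this]
    · rw [if_pos hi, if_neg hpi]
      simp [Xof, hi, hpi, π.symm_apply_apply]
    · rw [if_neg hi, if_pos hpi]; exact hz i hi hpi
    · rw [if_neg hi, if_neg hpi]
      have : y i = z i := hyz i (Or.inr ⟨hi, hpi⟩)
      simp [Xof, hi, hpi, π.symm_apply_apply, ← this]
  · -- depends only on T
    intro f g hfg
    funext j
    by_cases hj : j ∈ S <;> by_cases hpj : π j ∈ S <;> by_cases hsj : π.symm j ∈ S <;>
      simp only [Xof, hj, hpj, hsj, if_pos, if_neg, if_true, if_false, ite_true, ite_false] <;>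
      first
        | rfl
        | (apply hfg; simp only [Finset.mem_inter, Finset.mem_compl]
           refine ⟨?_, ?_⟩ <;> first
             | assumption
             | (rw [mem_image_perm]; simpa using hj)
             | (rw [mem_image_perm]; simpa)
             | simpa using hpj)
  · -- fixes elements of the set
    rintro a ⟨hay, -⟩
    funext j
    by_cases hj : j ∈ S <;> by_cases hpj : π j ∈ S <;> by_cases hsj : π.symm j ∈ S
    all_goals simp only [Xof, hj, hpj, hsj, if_true, if_false, ite_true, ite_false]
    -- cases where j ∈ S, π j ∈ S : goal y (π j) = a j
    · have h := hay j; rw [if_pos hj, if_pos hpj] at h; exact h.symm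
    · have h := hay j; rw [if_pos hj, if_pos hpj] at h; exact h.symm
    · have h := hay j; rw [if_pos hj, if_neg hpj] at h; exact h.symm
    · have h := hay j; rw [if_pos hj, if_neg hpj] at h; exact h.symm
    · have h := hay (π.symm j)
      rw [if_neg hsj, π.apply_symm_apply, if_neg hj] at h
      exact h
    · have h := hay (π.symm j)
      rw [if_neg hsj, π.apply_symm_apply, if_neg hj] at h
      exact h
  · -- restriction
    intro f j hj
    rw [Finset.mem_inter, Finset.mem_compl, mem_image_perm] at hj
    simp [Xof, hj.1, hj.2]


/-- Completion map for the middle-`y` count. -/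
def Yof (π : Equiv.Perm (Fin n)) (S : Finset (Fin n)) (y f : Fin n → Fin d) : Fin n → Fin d :=
  fun j => if j ∈ S then (if π.symm j ∈ S then y j else f (π.symm j))
    else (if π j ∈ S then f j else y j)

lemma card_mid (hd : 1 ≤ d) {y z : Fin n → Fin d} (hyz : Dag π S y z) :
    (Finset.univ.filter fun w => Pc π S w ∧ Dag π S y w ∧ Dag π S w z).card
      = d ^ (Sᶜ ∩ S.image (⇑π.symm)).card := by
  refine card_filter_eq_pow hd _ _ (Yof π S y) (fun f => ⟨?_, ?_, ?_⟩) ?_ ?_ ?_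
  · -- Pc (Yof π S y f)
    intro i hi hpi
    simp [Yof, hi, hpi, π.symm_apply_apply]
  · -- Dag y (Yof π S y f)
    rintro i (⟨hi, hsi⟩ | ⟨hi, hpi⟩)
    · simp [Yof, hi, hsi]
    · simp [Yof, hi, hpi]
  · -- Dag (Yof π S y f) z
    rintro i (⟨hi, hsi⟩ | ⟨hi, hpi⟩)
    · have := hyz i (Or.inl ⟨hi, hsi⟩)
      simp [Yof, hi, hsi, this]
    · have := hyz i (Or.inr ⟨hi, hpi⟩)
      simp [Yof, hi, hpi, this]
  · -- depends only on T
    intro f g hfg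
    funext j
    by_cases hj : j ∈ S <;> by_cases hpj : π j ∈ S <;> by_cases hsj : π.symm j ∈ S <;>
      simp only [Yof, hj, hpj, hsj, if_true, if_false, ite_true, ite_false] <;>
      first
        | rfl
        | (apply hfg
           simp only [Finset.mem_inter, Finset.mem_compl, mem_image_perm, Equiv.symm_symm]
           constructor <;> first
             | simpa using hsj
             | simpa using hj
             | simpa using hpj
             | simp [hj])
  · -- fixes elements of the set
    rintro w ⟨hw, hyw, -⟩
    funext j
    by_cases hj : j ∈ S <;> by_cases hpj : π j ∈ S <;> by_cases hsj : π.symm j ∈ S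
    all_goals simp only [Yof, hj, hpj, hsj, if_true, if_false, ite_true, ite_false]
    all_goals first
      | rfl
      | exact hyw j (Or.inl ⟨hj, hsj⟩)
      | exact hyw j (Or.inr ⟨hj, hpj⟩)
      | (have h := hw (π.symm j) hsj (by simpa using hj)
         rw [π.apply_symm_apply] at h
         exact h)
  · -- restriction
    intro f j hj
    rw [Finset.mem_inter, Finset.mem_compl, mem_image_perm, Equiv.symm_symm] at hj
    simp [Yof, hj.1, hj.2]

/-- Completion map for the trace count. -/
def Zof (π : Equiv.Perm (Fin n)) (S : Finset (Fin n)) (f : Fin n → Fin d) : Fin n → Fin d :=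
  fun j => if j ∈ S ∧ π.symm j ∉ S then f (π.symm j) else f j

lemma card_pc (hd : 1 ≤ d) :
    (Finset.univ.filter fun y : Fin n → Fin d => Pc π S y).card
      = d ^ ((S ∩ (Sᶜ).image (⇑π))ᶜ).card := by
  refine card_filter_eq_pow hd _ _ (Zof π S) ?_ ?_ ?_ ?_
  · -- Pc (Zof π S f)
    intro f i hi hpi
    have h1 : ¬ (i ∈ S ∧ π.symm i ∉ S) := fun h => hi h.1
    have h2 : (π i ∈ S ∧ π.symm (π i) ∉ S) := ⟨hpi, by simpa using hi⟩
    simp [Zof, h1, h2, π.symm_apply_apply, hi]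
  · -- depends only on T
    intro f g hfg
    funext j
    by_cases hj : j ∈ S ∧ π.symm j ∉ S
    · simp only [Zof, hj, if_true, ite_true]
      apply hfg
      simp only [Finset.mem_compl, Finset.mem_inter, mem_image_perm, not_and]
      intro h
      exact absurd (by simpa using hj.2) (by simp [h, hj])
    · simp only [Zof, hj, if_false, ite_false]
      apply hfg
      simp only [Finset.mem_compl, Finset.mem_inter, mem_image_perm, not_and]
      intro h1 h2
      exact hj ⟨h1, by simpa using h2⟩
  · -- fixes
    intro a ha
    funext j
    by_cases hj : j ∈ S ∧ π.symm j ∉ S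
    · simp only [Zof]
      rw [if_pos hj]
      have h := ha (π.symm j) hj.2 (by simpa using hj.1)
      rw [π.apply_symm_apply] at h
      exact h
    · simp [Zof, hj]
  · -- restriction
    intro f j hj
    simp only [Finset.mem_compl, Finset.mem_inter, mem_image_perm, not_and] at hj
    have : ¬ (j ∈ S ∧ π.symm j ∉ S) := by
      intro h
      exact absurd (by simpa using h.2) (by simpa using hj h.1)
    simp [Zof, this]


lemma image_compl_perm (π : Equiv.Perm (Fin n)) (S : Finset (Fin n)) :
    (Sᶜ).image (⇑π) = (S.image (⇑π))ᶜ := by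
  ext j
  rw [mem_image_perm, Finset.mem_compl, Finset.mem_compl, mem_image_perm]

lemma cardT1 (π : Equiv.Perm (Fin n)) (S : Finset (Fin n)) :
    (Sᶜ ∩ S.image (⇑π)).card = (S ∩ (Sᶜ).image (⇑π)).card := by
  have h1 : Sᶜ ∩ S.image (⇑π) = S.image (⇑π) \ S := by
    ext j; rw [Finset.mem_inter, Finset.mem_sdiff, Finset.mem_compl, and_comm]
  have h2 : S ∩ (Sᶜ).image (⇑π) = S \ S.image (⇑π) := by
    rw [image_compl_perm]
    ext j; rw [Finset.mem_inter, Finset.mem_sdiff, Finset.mem_compl]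
  rw [h1, h2, Finset.card_sdiff_comm]
  exact (Finset.card_image_of_injective _ π.injective)

lemma cardT2 (π : Equiv.Perm (Fin n)) (S : Finset (Fin n)) :
    (Sᶜ ∩ S.image (⇑π.symm)).card = (S ∩ (Sᶜ).image (⇑π)).card := by
  have h : (Sᶜ ∩ S.image (⇑π.symm)).image (⇑π) = S ∩ (Sᶜ).image (⇑π) := by
    ext j
    rw [mem_image_perm]
    simp only [Finset.mem_inter, Finset.mem_compl, mem_image_perm, Equiv.symm_symm]
    constructor
    · rintro ⟨h1, h2⟩
      exact ⟨by simpa using h2, by simpa using h1⟩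
    · rintro ⟨h1, h2⟩
      exact ⟨by simpa using h2, by simpa using h1⟩
  rw [← h, Finset.card_image_of_injective _ π.injective]

lemma two_k_le (π : Equiv.Perm (Fin n)) (S : Finset (Fin n)) :
    2 * (S ∩ (Sᶜ).image (⇑π)).card ≤ n := by
  have h1 : (S ∩ (Sᶜ).image (⇑π)).card ≤ S.card :=
    Finset.card_le_card Finset.inter_subset_left
  have h2 : (S ∩ (Sᶜ).image (⇑π)).card ≤ Sᶜ.card := by
    rw [← cardT1 π S]
    exact Finset.card_le_card Finset.inter_subset_left
  have h3 := Finset.card_add_card_compl S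
  simp only [Fintype.card_fin] at h3
  omega


/-- The projection matrix (up to scaling the indicator). -/
noncomputable def Qm (n d : ℕ) (π : Equiv.Perm (Fin n)) (S : Finset (Fin n)) :
    Matrix (Fin n → Fin d) (Fin n → Fin d) ℂ :=
  Matrix.of fun y z =>
    if Pc π S y ∧ Pc π S z ∧ Dag π S y z
    then ((d : ℂ) ^ (S ∩ (Sᶜ).image (⇑π)).card)⁻¹ else 0

lemma ptrans_apply' (π : Equiv.Perm (Fin n)) (S : Finset (Fin n)) (x y : Fin n → Fin d) :
    ptrans S (Pmat n d π) x y = if Cnd π S x y then 1 else 0 := by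
  show (if (fun i => if i ∈ S then x i else y i)
      = (fun i => if i ∈ S then y i else x i) ∘ ⇑π then (1:ℂ) else 0) = _
  refine if_congr ?_ rfl rfl
  rw [funext_iff]
  exact forall_congr' fun i => Iff.rfl

lemma Qm_herm (π : Equiv.Perm (Fin n)) (S : Finset (Fin n)) :
    (Qm n d π S)ᴴ = Qm n d π S := by
  ext y z
  simp only [conjTranspose_apply, Qm, Matrix.of_apply]
  by_cases h : Pc π S z ∧ Pc π S y ∧ Dag π S z y
  · rw [if_pos h, if_pos ⟨h.2.1, h.1, dag_symm h.2.2⟩]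
    simp
  · rw [if_neg h, if_neg fun hc => h ⟨hc.2.1, hc.1, dag_symm hc.2.2⟩, star_zero]

lemma Qm_idem (hd : 1 ≤ d) (π : Equiv.Perm (Fin n)) (S : Finset (Fin n)) :
    Qm n d π S * Qm n d π S = Qm n d π S := by
  have hd0 : ((d : ℂ) ^ (S ∩ (Sᶜ).image (⇑π)).card) ≠ 0 :=
    pow_ne_zero _ (Nat.cast_ne_zero.mpr (by omega))
  set c : ℂ := ((d : ℂ) ^ (S ∩ (Sᶜ).image (⇑π)).card)⁻¹ with hc
  ext y z
  rw [Matrix.mul_apply]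
  simp only [Qm, Matrix.of_apply]
  by_cases hy : Pc π S y
  · by_cases hz : Pc π S z
    · have step : ∀ w, (if Pc π S y ∧ Pc π S w ∧ Dag π S y w then c else 0)
          * (if Pc π S w ∧ Pc π S z ∧ Dag π S w z then c else 0)
          = if Pc π S w ∧ Dag π S y w ∧ Dag π S w z then c * c else 0 := by
        intro w
        split_ifs with h1 h2 h3 <;> first | tauto | ring
      rw [Finset.sum_congr rfl fun w _ => step w, ← Finset.sum_filter, Finset.sum_const,
        nsmul_eq_mul]
      by_cases hyz : Dag π S y z
      · rw [card_mid hd hyz, cardT2, if_pos ⟨hy, hz, hyz⟩]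
        push_cast
        rw [hc]
        field_simp
      · have hemp : (Finset.univ.filter
            fun w => Pc π S w ∧ Dag π S y w ∧ Dag π S w z) = ∅ := by
          rw [Finset.filter_eq_empty_iff]
          exact fun w _ hw => hyz (dag_trans hw.2.1 hw.2.2)
        rw [hemp, if_neg fun hcond => hyz hcond.2.2]
        simp
    · rw [if_neg (fun hcond => hz hcond.2.1 : ¬(Pc π S y ∧ Pc π S z ∧ Dag π S y z))]
      refine Finset.sum_eq_zero fun w _ => ?_
      have hzz : ¬(Pc π S w ∧ Pc π S z ∧ Dag π S w z) := fun hcond => hz hcond.2.1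
      rw [if_neg hzz, mul_zero]
  · rw [if_neg (fun hcond => hy hcond.1 : ¬(Pc π S y ∧ Pc π S z ∧ Dag π S y z))]
    refine Finset.sum_eq_zero fun w _ => ?_
    have hyy : ¬(Pc π S y ∧ Pc π S w ∧ Dag π S y w) := fun hcond => hy hcond.1
    rw [if_neg hyy, zero_mul]

lemma BB_eq (hd : 1 ≤ d) (π : Equiv.Perm (Fin n)) (S : Finset (Fin n)) :
    (ptrans S (Pmat n d π))ᴴ * ptrans S (Pmat n d π)
      = ((d : ℂ) ^ (2 * (S ∩ (Sᶜ).image (⇑π)).card)) • Qm n d π S := by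
  have hd0 : ((d : ℂ) ^ (S ∩ (Sᶜ).image (⇑π)).card) ≠ 0 :=
    pow_ne_zero _ (Nat.cast_ne_zero.mpr (by omega))
  ext y z
  rw [Matrix.mul_apply]
  simp only [conjTranspose_apply, ptrans_apply', Matrix.smul_apply, Qm, Matrix.of_apply,
    smul_eq_mul]
  have step : ∀ x, star (if Cnd π S x y then (1:ℂ) else 0) * (if Cnd π S x z then (1:ℂ) else 0)
      = if Cnd π S x y ∧ Cnd π S x z then 1 else 0 := by
    intro x
    split_ifs with h1 h2 h3 <;> simp_all
  rw [Finset.sum_congr rfl fun x _ => step x, Finset.sum_boole]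
  by_cases h : Pc π S y ∧ Pc π S z ∧ Dag π S y z
  · rw [if_pos h, card_cnd hd h.1 h.2.1 h.2.2, cardT1]
    push_cast
    rw [two_mul, pow_add]
    field_simp
  · have hemp : (Finset.univ.filter fun x => Cnd π S x y ∧ Cnd π S x z) = ∅ := by
      rw [Finset.filter_eq_empty_iff]
      exact fun x _ hx => h ⟨cnd_pc hx.1, cnd_pc hx.2, cnd_dag hx.1 hx.2⟩
    rw [hemp, if_neg h, mul_zero]
    simp

lemma rank_cast_eq_trace {m : Type*} [Fintype m] [DecidableEq m] (Q : Matrix m m ℂ)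
    (h : Q * Q = Q) : (Q.rank : ℂ) = Q.trace := by
  have hf : Q.mulVecLin ∘ₗ Q.mulVecLin = Q.mulVecLin := by
    rw [← Matrix.mulVecLin_mul, h]
  have hproj : LinearMap.IsProj (LinearMap.range Q.mulVecLin) Q.mulVecLin := by
    constructor
    · intro x
      exact LinearMap.mem_range_self _ x
    · rintro x ⟨v, rfl⟩
      have := LinearMap.ext_iff.mp hf v
      rwa [LinearMap.comp_apply] at this
  have ht := hproj.trace
  have hm : LinearMap.trace ℂ (m → ℂ) Q.mulVecLin = Q.trace := by
    rw [LinearMap.trace_eq_matrix_trace ℂ (Pi.basisFun ℂ m), LinearMap.toMatrix_eq_toMatrix']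
    rw [← Matrix.toLin'_apply', LinearMap.toMatrix'_toLin']
  rw [← hm, ht]
  rfl

lemma Qm_trace (hd : 1 ≤ d) (π : Equiv.Perm (Fin n)) (S : Finset (Fin n)) :
    (Qm n d π S).trace = (d : ℂ) ^ (n - 2 * (S ∩ (Sᶜ).image (⇑π)).card) := by
  have hdc : ((d : ℂ)) ≠ 0 := Nat.cast_ne_zero.mpr (by omega)
  set k := (S ∩ (Sᶜ).image (⇑π)).card with hk
  have h2k := two_k_le π S
  rw [Matrix.trace]
  have step : ∀ y : Fin n → Fin d, (Qm n d π S).diag y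
      = if Pc π S y then ((d : ℂ) ^ k)⁻¹ else 0 := by
    intro y
    show (if Pc π S y ∧ Pc π S y ∧ Dag π S y y then ((d : ℂ) ^ k)⁻¹ else 0) = _
    refine if_congr ?_ rfl rfl
    exact ⟨fun h => h.1, fun h => ⟨h, h, dag_refl π S y⟩⟩
  rw [Finset.sum_congr rfl fun y _ => step y, ← Finset.sum_filter, Finset.sum_const,
    nsmul_eq_mul, card_pc hd]
  have hcompl : ((S ∩ (Sᶜ).image (⇑π))ᶜ).card = n - k := by
    rw [Finset.card_compl, Fintype.card_fin, hk]
  rw [hcompl]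
  push_cast
  have : n - k = (n - 2 * k) + k := by omega
  rw [this, pow_add]
  field_simp

lemma Qm_rank (hd : 1 ≤ d) (π : Equiv.Perm (Fin n)) (S : Finset (Fin n)) :
    (Qm n d π S).rank = d ^ (n - 2 * (S ∩ (Sᶜ).image (⇑π)).card) := by
  have h := rank_cast_eq_trace _ (Qm_idem hd π S)
  rw [Qm_trace hd π S] at h
  have : ((Qm n d π S).rank : ℂ) = ((d ^ (n - 2 * (S ∩ (Sᶜ).image (⇑π)).card) : ℕ) : ℂ) := by
    rw [h]; push_cast; ring
  exact_mod_cast this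

end PTproof

/-- `P_d(π)^{Γ_S}` has exactly `d^{n-2k}` nonzero singular values, each equal to `d^k`,
where `k = |S ∩ π(S̄)|`: equivalently `(P^{Γ_S})† P^{Γ_S} = d^{2k} Q` for a rank-`d^{n-2k}`
orthogonal projection `Q`. -/
theorem partial_transpose_perm_op_singular_values (n d : ℕ) (hd : 1 ≤ d)
    (π : Equiv.Perm (Fin n)) (S : Finset (Fin n)) :
    let B := ptrans S (Pmat n d π)
    let k := (S ∩ (Sᶜ).image (⇑π)).card
    ∃ Q : Matrix (Fin n → Fin d) (Fin n → Fin d) ℂ,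
      Qᴴ = Q ∧ Q * Q = Q ∧ Bᴴ * B = ((d : ℂ) ^ (2 * k)) • Q ∧
      Q.rank = d ^ (n - 2 * k) := by
  intro B k
  exact ⟨PTproof.Qm n d π S, PTproof.Qm_herm π S, PTproof.Qm_idem hd π S,
    PTproof.BB_eq hd π S, PTproof.Qm_rank hd π S⟩
end

section
/- For any π₁, ..., π_k ∈ S_n there exists a subset S ⊆ [n] such that Σ_{i=1}^k |π_i(S) ∩ S̄| ≥ (1/4) Σ_{i=1}^k |π_i|, where S̄ = [n]∖S and |π| = n − c(π) is the minimal transposition length of π. -/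
open Equiv Finset

namespace Equiv.Perm

variable {α : Type*} [DecidableEq α] [Fintype α]

theorem exists_swap_list_length_le_card_support (σ : Perm α) :
    ∃ l : List (Perm α), l.length ≤ #σ.support ∧ (∀ τ ∈ l, τ.IsSwap) ∧ l.prod = σ := by
  induction hm : #σ.support using Nat.strong_induction_on generalizing σ with
  | _ m ih =>
  rcases σ.support.eq_empty_or_nonempty with hσ | ⟨x, hx⟩
  · exact ⟨[], by simp, by simp, (support_eq_empty_iff.mp hσ).symm⟩
  · have hx' : σ x ≠ x := mem_support.mp hx
    have hlt := card_support_swap_mul hx'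
    obtain ⟨l, hl, hswap, hprod⟩ := ih _ (hm ▸ hlt) (swap x (σ x) * σ) rfl
    refine ⟨swap x (σ x) :: l, ?_, ?_, ?_⟩
    · rw [List.length_cons]
      omega
    · exact List.forall_mem_cons.mpr ⟨⟨x, σ x, hx'.symm, rfl⟩, hswap⟩
    · rw [List.prod_cons, hprod, ← mul_assoc, swap_mul_self, one_mul]

theorem card_image_inter_compl (σ : Perm α) (S : Finset α) :
    #(S.image σ ∩ Sᶜ) = #{x | x ∈ S ∧ σ x ∉ S} := by
  rw [← card_image_of_injective {x | x ∈ S ∧ σ x ∉ S} σ.injective]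
  congr 1
  ext y
  simp only [mem_inter, mem_image, mem_compl, mem_filter_univ]
  constructor
  · rintro ⟨⟨x, hx, rfl⟩, hy⟩
    exact ⟨x, ⟨hx, hy⟩, rfl⟩
  · rintro ⟨x, ⟨hx, hy⟩, rfl⟩
    exact ⟨⟨x, hx, rfl⟩, hy⟩

theorem card_filter_mem_and_notMem {a b : α} (hab : a ≠ b) :
    #{S : Finset α | a ∈ S ∧ b ∉ S} = 2 ^ (Fintype.card α - 2) := by
  have hIcc : ({S : Finset α | a ∈ S ∧ b ∉ S} : Finset _) = Icc {a} (univ.erase b) := by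
    ext S
    simp [subset_erase]
  rw [hIcc, card_Icc_finset (by simpa using hab), card_erase_of_mem (mem_univ b),
    card_singleton, card_univ, Nat.sub_sub]

theorem sum_card_image_inter_compl (σ : Perm α) :
    ∑ S : Finset α, #(S.image σ ∩ Sᶜ) = #σ.support * 2 ^ (Fintype.card α - 2) := by
  simp_rw [card_image_inter_compl, card_filter]
  rw [sum_comm]
  simp_rw [← card_filter]
  rw [← sum_subset (subset_univ σ.support), ← smul_eq_mul, ← sum_const]
  · exact sum_congr rfl fun x hx => card_filter_mem_and_notMem (mem_support.mp hx).symm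
  · intro x _ hx
    rw [notMem_support.mp hx, card_eq_zero, filter_eq_empty_iff]
    tauto

theorem exists_finset_quarter_sum_card_support_le {ι : Type*} [Fintype ι] (π : ι → Perm α) :
    ∃ S : Finset α,
      (1 / 4 : ℝ) * ∑ i, (#(π i).support : ℝ) ≤ ∑ i, (#(S.image (π i) ∩ Sᶜ) : ℝ) := by
  -- not an equality: `Fintype.card α - 2` truncates when `Fintype.card α < 2`
  have two_pow_div_four_le : (2 : ℝ) ^ Fintype.card α / 4 ≤ 2 ^ (Fintype.card α - 2) := by
    rw [div_le_iff₀ (by norm_num), show (4 : ℝ) = 2 ^ 2 by norm_num, ← pow_add]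
    exact pow_le_pow_right₀ (by norm_num) (by omega)
  suffices h : ∑ _S : Finset α, (1 / 4 : ℝ) * ∑ i, (#(π i).support : ℝ) ≤
      ∑ S : Finset α, ∑ i, (#(S.image (π i) ∩ Sᶜ) : ℝ) by
    obtain ⟨S, -, hS⟩ := exists_le_of_sum_le univ_nonempty h
    exact ⟨S, hS⟩
  rw [sum_const, card_univ, Fintype.card_finset, sum_comm, nsmul_eq_mul, Nat.cast_pow,
    Nat.cast_ofNat, mul_sum, mul_sum]
  gcongr with i
  calc (2 : ℝ) ^ Fintype.card α * ((1 / 4) * #(π i).support)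
      = 2 ^ Fintype.card α / 4 * #(π i).support := by ring
    _ ≤ 2 ^ (Fintype.card α - 2) * #(π i).support := by gcongr
    _ = ∑ S : Finset α, (#(S.image (π i) ∩ Sᶜ) : ℝ) := by
      exact_mod_cast (mul_comm _ _).trans (sum_card_image_inter_compl (π i)).symm

end Equiv.Perm

theorem transLength_le_card_support {n : ℕ} (π : Perm (Fin n)) : transLength π ≤ #π.support := by
  obtain ⟨l, hl, hswap, hprod⟩ := π.exists_swap_list_length_le_card_support
  calc transLength π ≤ l.length := Nat.sInf_le ⟨l, rfl, hswap, hprod⟩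
    _ ≤ #π.support := hl

theorem exists_cut_for_many_perms (n k : ℕ) (π : Fin k → Equiv.Perm (Fin n)) :
    ∃ S : Finset (Fin n),
      (1 / 4 : ℝ) * ∑ i : Fin k, (transLength (π i) : ℝ)
        ≤ ∑ i : Fin k, ((S.image (⇑(π i)) ∩ Sᶜ).card : ℝ) := by
  obtain ⟨S, hS⟩ := Perm.exists_finset_quarter_sum_card_support_le π
  refine ⟨S, le_trans ?_ hS⟩
  gcongr with i
  exact_mod_cast transLength_le_card_support (π i)
end

section
/- For any single permutation π ∈ S_n there exists S ⊆ [n] with |π(S) ∩ S̄| ≥ |π|/2, where S̄ = [n]∖S and |π| = n − c(π). -/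
private lemma key_lemma {n : ℕ} : ∀ (k : ℕ) (π : Equiv.Perm (Fin n)), π.support.card ≤ k →
    ∃ (S : Finset (Fin n)) (l : List (Equiv.Perm (Fin n))),
      S ⊆ π.support ∧ (∀ a ∈ S, π a ∉ S) ∧ (∀ τ ∈ l, τ.IsSwap) ∧ l.prod = π ∧
        l.length ≤ 2 * S.card := by
  intro k
  induction k with
  | zero =>
    intro π hπ
    have hπ1 : π = 1 := by
      rw [← Equiv.Perm.support_eq_empty_iff]
      exact Finset.card_eq_zero.mp (Nat.le_zero.mp hπ)
    subst hπ1
    exact ⟨∅, [], by simp, by simp, by simp, by simp, by simp⟩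
  | succ k ih =>
    intro π hπ
    by_cases hsupp : π.support = ∅
    · have hπ1 : π = 1 := Equiv.Perm.support_eq_empty_iff.mp hsupp
      subst hπ1
      exact ⟨∅, [], by simp, by simp, by simp, by simp, by simp⟩
    · obtain ⟨x, hx⟩ := Finset.nonempty_of_ne_empty hsupp
      set y := π x with hy
      have hxney : π x ≠ x := Equiv.Perm.mem_support.mp hx
      have hyx : y ≠ x := hxney
      have hy_supp : y ∈ π.support := Equiv.Perm.apply_mem_support.mpr hx
      set z := π y with hz
      have hz_supp : z ∈ π.support := Equiv.Perm.apply_mem_support.mpr hy_supp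
      have hzy : z ≠ y := Equiv.Perm.mem_support.mp hy_supp
      by_cases hzx : z = x
      · -- 2-cycle case : π swaps x and y
        set π' := Equiv.swap x y * π with hπ'
        have h1 : ∀ u, π' u = Equiv.swap x y (π u) := fun u => rfl
        have hπ'x : π' x = x := by
          rw [h1, ← hy, Equiv.swap_apply_right]
        have hπ'y : π' y = y := by
          rw [h1, ← hz, hzx, Equiv.swap_apply_left]
        have hsub : π'.support ⊆ π.support.erase x := by
          intro u hu
          have hu' : π' u ≠ u := Equiv.Perm.mem_support.mp hu
          have hux : u ≠ x := by intro h; exact hu' (h ▸ hπ'x)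
          refine Finset.mem_erase.mpr ⟨hux, ?_⟩
          by_contra hns
          have hfix : π u = u := by simpa using Equiv.Perm.notMem_support.mp hns
          have huy : u ≠ y := by intro h; exact hu' (h ▸ hπ'y)
          rw [h1, hfix, Equiv.swap_apply_of_ne_of_ne hux huy] at hu'
          exact hu' rfl
        have hcard : π'.support.card ≤ k := by
          have h2 := Finset.card_le_card hsub
          have h3 : (π.support.erase x).card = π.support.card - 1 :=
            Finset.card_erase_of_mem hx
          omega
        obtain ⟨S', l', hS'sub, hdisj, hswaps, hprod, hlen⟩ := ih π' hcard
        have hxS' : x ∉ S' := fun h => by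
          have := Equiv.Perm.mem_support.mp (hS'sub h); exact this hπ'x
        have hyS' : y ∉ S' := fun h => by
          have := Equiv.Perm.mem_support.mp (hS'sub h); exact this hπ'y
        have happly : ∀ a ∈ S', π a = π' a := by
          intro a ha
          have hb : π' a ∈ π'.support := Equiv.Perm.apply_mem_support.mpr (hS'sub ha)
          have hbx : π' a ≠ x := fun h => (Equiv.Perm.mem_support.mp (h ▸ hb)) hπ'x
          have hby : π' a ≠ y := fun h => (Equiv.Perm.mem_support.mp (h ▸ hb)) hπ'y
          have h2 : π a = Equiv.swap x y (π' a) := by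
            rw [h1, Equiv.swap_apply_self]
          rw [h2, Equiv.swap_apply_of_ne_of_ne hbx hby]
        refine ⟨insert x S', Equiv.swap x y :: l', ?_, ?_, ?_, ?_, ?_⟩
        · intro a ha
          rcases Finset.mem_insert.mp ha with h | h
          · exact h ▸ hx
          · exact Finset.mem_of_mem_erase (hsub (hS'sub h))
        · intro a ha
          rcases Finset.mem_insert.mp ha with h | h
          · subst h
            rw [← hy]
            simp only [Finset.mem_insert, not_or]
            exact ⟨hyx, hyS'⟩
          · rw [happly a h]
            simp only [Finset.mem_insert, not_or]
            have hb : π' a ∈ π'.support := Equiv.Perm.apply_mem_support.mpr (hS'sub h)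
            exact ⟨fun hc => (Equiv.Perm.mem_support.mp (hc ▸ hb)) hπ'x, hdisj a h⟩
        · intro τ hτ
          rcases List.mem_cons.mp hτ with h | h
          · exact h ▸ ⟨x, y, fun hc => hyx hc.symm, rfl⟩
          · exact hswaps τ h
        · rw [List.prod_cons, hprod, hπ']
          rw [← mul_assoc, Equiv.swap_mul_self, one_mul]
        · rw [List.length_cons, Finset.card_insert_of_notMem hxS']
          omega
      · -- cycle of length ≥ 3 through x, y, z
        have hzx' : z ≠ x := hzx
        set π' := Equiv.swap y z * (Equiv.swap x y * π) with hπ'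
        have h1 : ∀ u, π' u = Equiv.swap y z (Equiv.swap x y (π u)) := fun u => rfl
        have hπ'x : π' x = x := by
          rw [h1, ← hy, Equiv.swap_apply_right,
            Equiv.swap_apply_of_ne_of_ne (fun h => hyx h.symm) (fun h => hzx' h.symm)]
        have hπ'y : π' y = y := by
          rw [h1, ← hz, Equiv.swap_apply_of_ne_of_ne hzx' hzy, Equiv.swap_apply_right]
        have hsub : π'.support ⊆ π.support.erase x := by
          intro u hu
          have hu' : π' u ≠ u := Equiv.Perm.mem_support.mp hu
          have hux : u ≠ x := by intro h; exact hu' (h ▸ hπ'x)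
          refine Finset.mem_erase.mpr ⟨hux, ?_⟩
          by_contra hns
          have hfix : π u = u := by simpa using Equiv.Perm.notMem_support.mp hns
          have huy : u ≠ y := fun h => (h ▸ hns) hy_supp
          have huz : u ≠ z := fun h => (h ▸ hns) hz_supp
          rw [h1, hfix, Equiv.swap_apply_of_ne_of_ne hux huy,
            Equiv.swap_apply_of_ne_of_ne huy huz] at hu'
          exact hu' rfl
        have hcard : π'.support.card ≤ k := by
          have h2 := Finset.card_le_card hsub
          have h3 : (π.support.erase x).card = π.support.card - 1 :=
            Finset.card_erase_of_mem hx
          omega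
        obtain ⟨S', l', hS'sub, hdisj, hswaps, hprod, hlen⟩ := ih π' hcard
        have hxS' : x ∉ S' := fun h => by
          have := Equiv.Perm.mem_support.mp (hS'sub h); exact this hπ'x
        have hyS' : y ∉ S' := fun h => by
          have := Equiv.Perm.mem_support.mp (hS'sub h); exact this hπ'y
        have hπeq : π = Equiv.swap x y * (Equiv.swap y z * π') := by
          rw [hπ', Equiv.swap_mul_self_mul, Equiv.swap_mul_self_mul]
        have happly : ∀ a ∈ S', π a = Equiv.swap x y (Equiv.swap y z (π' a)) := by
          intro a ha
          conv_lhs => rw [hπeq]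
          rfl
        have hbprops : ∀ a ∈ S', π' a ≠ x ∧ π' a ≠ y := by
          intro a ha
          have hb : π' a ∈ π'.support := Equiv.Perm.apply_mem_support.mpr (hS'sub ha)
          exact ⟨fun h => (Equiv.Perm.mem_support.mp (h ▸ hb)) hπ'x,
            fun h => (Equiv.Perm.mem_support.mp (h ▸ hb)) hπ'y⟩
        have happly2 : ∀ a ∈ S', π' a ≠ z → π a = π' a := by
          intro a ha hbz
          obtain ⟨hbx, hby⟩ := hbprops a ha
          rw [happly a ha, Equiv.swap_apply_of_ne_of_ne hby hbz,
            Equiv.swap_apply_of_ne_of_ne hbx hby]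
        have happly3 : ∀ a ∈ S', π' a = z → π a = x := by
          intro a ha hbz
          rw [happly a ha, hbz, Equiv.swap_apply_right, Equiv.swap_apply_right]
        have hswaps2 : ∀ τ ∈ Equiv.swap x y :: Equiv.swap y z :: l', τ.IsSwap := by
          intro τ hτ
          rcases List.mem_cons.mp hτ with h | h
          · exact h ▸ ⟨x, y, fun hc => hyx hc.symm, rfl⟩
          rcases List.mem_cons.mp h with h' | h'
          · exact h' ▸ ⟨y, z, fun hc => hzy hc.symm, rfl⟩
          · exact hswaps τ h'
        have hprod2 : (Equiv.swap x y :: Equiv.swap y z :: l').prod = π := by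
          rw [List.prod_cons, List.prod_cons, hprod, ← hπeq]
        have hlen2 : (Equiv.swap x y :: Equiv.swap y z :: l').length ≤ 2 * (S'.card + 1) := by
          simp only [List.length_cons]; omega
        by_cases hzim : z ∈ S'.image ⇑π'
        · -- z is hit by π' from S' : add y to S'
          obtain ⟨s₀, hs₀, hps₀⟩ := Finset.mem_image.mp hzim
          have hzS' : z ∉ S' := hps₀ ▸ hdisj s₀ hs₀
          refine ⟨insert y S', Equiv.swap x y :: Equiv.swap y z :: l', ?_, ?_, hswaps2,
            hprod2, ?_⟩
          · intro a ha
            rcases Finset.mem_insert.mp ha with h | h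
            · exact h ▸ hy_supp
            · exact Finset.mem_of_mem_erase (hsub (hS'sub h))
          · intro a ha
            rcases Finset.mem_insert.mp ha with h | h
            · subst h
              rw [← hz]
              simp only [Finset.mem_insert, not_or]
              exact ⟨hzy, hzS'⟩
            · simp only [Finset.mem_insert, not_or]
              by_cases hbz : π' a = z
              · rw [happly3 a h hbz]
                exact ⟨fun hc => hyx hc.symm, hxS'⟩
              · rw [happly2 a h hbz]
                exact ⟨(hbprops a h).2, hdisj a h⟩
          · rw [Finset.card_insert_of_notMem hyS']
            exact hlen2
        · -- z is not hit : add x to S'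
          refine ⟨insert x S', Equiv.swap x y :: Equiv.swap y z :: l', ?_, ?_, hswaps2,
            hprod2, ?_⟩
          · intro a ha
            rcases Finset.mem_insert.mp ha with h | h
            · exact h ▸ hx
            · exact Finset.mem_of_mem_erase (hsub (hS'sub h))
          · intro a ha
            rcases Finset.mem_insert.mp ha with h | h
            · subst h
              rw [← hy]
              simp only [Finset.mem_insert, not_or]
              exact ⟨hyx, hyS'⟩
            · have hbz : π' a ≠ z := fun hc =>
                hzim (Finset.mem_image.mpr ⟨a, h, hc⟩)
              rw [happly2 a h hbz]
              simp only [Finset.mem_insert, not_or]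
              exact ⟨(hbprops a h).1, hdisj a h⟩
          · rw [Finset.card_insert_of_notMem hxS']
            exact hlen2

theorem exists_cut_for_single_perm (n : ℕ) (π : Equiv.Perm (Fin n)) :
    ∃ S : Finset (Fin n),
      (transLength π : ℝ) / 2 ≤ ((S.image (⇑π) ∩ Sᶜ).card : ℝ) := by
  obtain ⟨S, l, hSsub, hdisj, hswaps, hprod, hlen⟩ :=
    key_lemma π.support.card π le_rfl
  refine ⟨S, ?_⟩
  have htl : transLength π ≤ l.length :=
    Nat.sInf_le ⟨l, rfl, hswaps, hprod⟩
  have himg : S.image ⇑π ∩ Sᶜ = S.image ⇑π := by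
    apply Finset.inter_eq_left.mpr
    intro b hb
    obtain ⟨a, ha, hab⟩ := Finset.mem_image.mp hb
    exact Finset.mem_compl.mpr (hab ▸ hdisj a ha)
  have hcardimg : (S.image ⇑π).card = S.card :=
    Finset.card_image_of_injective S π.injective
  rw [himg, hcardimg]
  have : (transLength π : ℝ) ≤ 2 * S.card := by
    have := htl.trans hlen
    exact_mod_cast this
  linarith
end
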